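/- arXiv:1810.09345 — 6 statements merged into one kernel-verified Lean document; each statement's English description precedes it below -/
import Mathlib

section
/- Let R be a Łukasiewicz near semiring with involution α. Then for all x, y ∈ R: (a) x·α(x) = α(x)·x = 0; (b) R is integral, i.e., x + 1 = 1; (c) x·α(x + y) = 0; (d) (x + y)·α(x) = y·α(x); (e) x + y = α(α(x·α(y))·α(y)). -/
/-- A near semiring: ⟨R, +, ·, 0, 1⟩ with ⟨R, +, 0⟩ a commutative monoid,
⟨R, ·, 1⟩ a unital groupoid, right distributivity, and 0 annihilating. -/
structure NearSemiring (R : Type*) where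
  add : R → R → R
  mul : R → R → R
  zero : R
  one : R
  add_assoc : ∀ x y z : R, add (add x y) z = add x (add y z)
  add_comm : ∀ x y : R, add x y = add y x
  add_zero : ∀ x : R, add x zero = x
  mul_one : ∀ x : R, mul x one = x
  one_mul : ∀ x : R, mul one x = x
  right_distrib : ∀ x y z : R, mul (add x y) z = add (mul x z) (mul y z)
  mul_zero : ∀ x : R, mul x zero = zero
  zero_mul : ∀ x : R, mul zero x = zero

/-- The induced relation: x ≤ y iff x + y = y. -/
def NearSemiring.le {R : Type*} (S : NearSemiring R) (x y : R) : Prop :=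
  S.add x y = y

/-- An involutive near semiring: an idempotent near semiring with an
antitone involution α (antitone w.r.t. the order x ≤ y iff x + y = y). -/
structure InvNearSemiring (R : Type*) extends NearSemiring R where
  add_idem : ∀ x : R, add x x = x
  alpha : R → R
  alpha_alpha : ∀ x : R, alpha (alpha x) = x
  alpha_antitone : ∀ x y : R, add x y = y → add (alpha y) (alpha x) = alpha x

/-- A Łukasiewicz near semiring: an involutive near semiring satisfying (Ł). -/
structure LukNearSemiring (R : Type*) extends InvNearSemiring R where
  luk : ∀ x y : R,
    mul (alpha (mul x (alpha y))) (alpha y) = mul (alpha (mul y (alpha x))) (alpha x)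

/-!
Instances of (Ł) with one argument equal to `0` or `1` do all the work. Together with the
monotonicity `x ≤ y → x·z ≤ y·z` coming from right distributivity, they give `α 1 = 0`, hence
`α 0 = 1` is the top element (integrality) and `x·α x = 0`. Item (e) is (Ł) for `y` and `x + y`,
simplified by (c) and (d).
-/

namespace NearSemiring

variable {R : Type*} (S : NearSemiring R)

theorem zero_add (x : R) : S.add S.zero x = x := by
  rw [S.add_comm]; exact S.add_zero x

theorem mul_le_mul_right {x y : R} (h : S.le x y) (z : R) : S.le (S.mul x z) (S.mul y z) := by
  unfold le at *
  rw [← S.right_distrib, h]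

theorem eq_zero_of_le_zero {x : R} (h : S.le x S.zero) : x = S.zero := by
  rw [← h, S.add_zero]

end NearSemiring

namespace InvNearSemiring

variable {R : Type*} (S : InvNearSemiring R)

theorem le_add_right (x y : R) : S.le x (S.add x y) := by
  show S.add x (S.add x y) = S.add x y
  rw [← S.add_assoc, S.add_idem]

theorem le_alpha_zero (x : R) : S.le x (S.alpha S.zero) := by
  have h := S.alpha_antitone S.zero (S.alpha x) (S.zero_add _)
  rwa [S.alpha_alpha] at h

end InvNearSemiring

namespace LukNearSemiring

variable {R : Type*} (S : LukNearSemiring R)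

theorem alpha_zero_mul_alpha_one : S.mul (S.alpha S.zero) (S.alpha S.one) = S.zero := by
  have h := S.luk S.one S.zero
  rw [S.one_mul, S.alpha_alpha, S.zero_mul, S.zero_mul] at h
  exact h.symm

theorem alpha_one : S.alpha S.one = S.zero := by
  have hsq : S.mul (S.alpha S.one) (S.alpha S.one) = S.zero := by
    apply S.eq_zero_of_le_zero
    rw [← S.alpha_zero_mul_alpha_one]
    exact S.mul_le_mul_right (S.le_alpha_zero _) _
  have h := S.luk S.one (S.alpha S.one)
  rw [hsq, S.alpha_alpha, S.mul_one, S.mul_one] at h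
  rw [h, S.alpha_zero_mul_alpha_one]

theorem alpha_zero : S.alpha S.zero = S.one := by
  rw [← S.alpha_one, S.alpha_alpha]

theorem add_one (x : R) : S.add x S.one = S.one := by
  have h := S.le_alpha_zero x
  rwa [S.alpha_zero] at h

theorem mul_alpha_self (x : R) : S.mul x (S.alpha x) = S.zero := by
  have h := S.luk x S.one
  rw [S.alpha_one, S.mul_zero, S.one_mul, S.alpha_alpha] at h
  exact h.symm

theorem alpha_mul_self (x : R) : S.mul (S.alpha x) x = S.zero := by
  simpa only [S.alpha_alpha] using S.mul_alpha_self (S.alpha x)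

theorem mul_alpha_add (x y : R) : S.mul x (S.alpha (S.add x y)) = S.zero := by
  apply S.eq_zero_of_le_zero
  rw [← S.mul_alpha_self (S.add x y)]
  exact S.mul_le_mul_right (S.le_add_right x y) _

theorem add_mul_alpha_left (x y : R) :
    S.mul (S.add x y) (S.alpha x) = S.mul y (S.alpha x) := by
  rw [S.right_distrib, S.mul_alpha_self, S.zero_add]

theorem add_eq_alpha_alpha_mul (x y : R) :
    S.add x y = S.alpha (S.mul (S.alpha (S.mul x (S.alpha y))) (S.alpha y)) := by
  have h := S.luk y (S.add x y)
  rw [S.add_comm x y, S.mul_alpha_add, S.alpha_zero, S.one_mul, S.add_mul_alpha_left] at h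
  rw [← h, S.alpha_alpha, S.add_comm]

end LukNearSemiring

/-- Basic arithmetic of Łukasiewicz near semirings. -/
theorem lukNearSemiring_arith {R : Type*} (S : LukNearSemiring R) :
    -- (a) x·α(x) = α(x)·x = 0
    (∀ x : R, S.mul x (S.alpha x) = S.zero) ∧
    (∀ x : R, S.mul (S.alpha x) x = S.zero) ∧
    -- (b) integrality: x + 1 = 1
    (∀ x : R, S.add x S.one = S.one) ∧
    -- (c) x·α(x + y) = 0
    (∀ x y : R, S.mul x (S.alpha (S.add x y)) = S.zero) ∧
    -- (d) (x + y)·α(x) = y·α(x)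
    (∀ x y : R, S.mul (S.add x y) (S.alpha x) = S.mul y (S.alpha x)) ∧
    -- (e) x + y = α(α(x·α(y))·α(y))
    (∀ x y : R, S.add x y = S.alpha (S.mul (S.alpha (S.mul x (S.alpha y))) (S.alpha y))) :=
  ⟨S.mul_alpha_self, S.alpha_mul_self, S.add_one, S.mul_alpha_add, S.add_mul_alpha_left,
    S.add_eq_alpha_alpha_mul⟩
end

section
/- Let R be a Łukasiewicz near semiring with involution α. Then for all x, y ∈ R, x ≤ y (i.e., x + y = y) if and only if x·α(y) = 0. -/
/-! The top element `α 0` must be `1`: instances of (Ł) at `(1, 0)` and at `(α 1, 1)` force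
`α 1 = 0`. With `α 0 = 1`, (Ł) at `(1, y)` gives `y · α y = 0`, so `x ≤ y` yields
`x · α y ≤ y · α y = 0`. Conversely, if `x · α y = 0` then (Ł) at `(x, y)` reads
`α y = α (y · α x) · α x ≤ α x`, and `α` reverses this to `x ≤ y`. -/

namespace NearSemiring

variable {R : Type*} (S : NearSemiring R)

theorem mul_le_of_le_one {u : R} (h : S.le u S.one) (v : R) : S.le (S.mul u v) v := by
  simpa only [S.one_mul] using S.mul_le_mul_right h v

end NearSemiring

namespace InvNearSemiring

variable {R : Type*} (S : InvNearSemiring R)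

theorem le_of_alpha_le_alpha {x y : R} (h : S.le (S.alpha y) (S.alpha x)) : S.le x y := by
  simpa only [NearSemiring.le, S.alpha_alpha] using S.alpha_antitone _ _ h

end InvNearSemiring

namespace LukNearSemiring

variable {R : Type*} (S : LukNearSemiring R)

theorem mul_le (u v : R) : S.le (S.mul u v) v :=
  S.mul_le_of_le_one (S.alpha_zero ▸ S.le_alpha_zero u) v

end LukNearSemiring

/-- In a Łukasiewicz near semiring, x ≤ y iff x·α(y) = 0. -/
theorem lukNearSemiring_le_iff {R : Type*} (S : LukNearSemiring R) (x y : R) :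
    S.add x y = y ↔ S.mul x (S.alpha y) = S.zero := by
  constructor
  · intro h
    apply S.eq_zero_of_le_zero
    simpa only [S.mul_alpha_self y] using S.mul_le_mul_right h (S.alpha y)
  · intro h
    have hL := S.luk x y
    rw [h, S.alpha_zero, S.one_mul] at hL
    exact S.le_of_alpha_le_alpha (hL ▸ S.mul_le _ _)
end

section
/- Let R be a Łukasiewicz near semiring whose multiplication is associative: (x·y)·z = x·(y·z) for all x, y, z. Then multiplication is commutative (x·y = y·x for all x, y) and left distributivity x·(y + z) = (x·y) + (x·z) holds; hence R is a commutative Łukasiewicz semiring. -/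
namespace NearSemiring

variable {R : Type*} (S : NearSemiring R)

theorem zero_le (x : R) : S.le S.zero x :=
  S.zero_add x

theorem le_antisymm {x y : R} (hxy : S.le x y) (hyx : S.le y x) : x = y := by
  rw [← hyx, S.add_comm]
  exact hxy

end NearSemiring

namespace InvNearSemiring

variable {R : Type*} (S : InvNearSemiring R)

theorem alpha_le_alpha {x y : R} (h : S.le x y) : S.le (S.alpha y) (S.alpha x) :=
  S.alpha_antitone x y h

theorem le_alpha_iff {x y : R} : S.le x (S.alpha y) ↔ S.le y (S.alpha x) := by
  refine ⟨fun h => ?_, fun h => ?_⟩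
  · simpa only [S.alpha_alpha] using S.alpha_le_alpha h
  · simpa only [S.alpha_alpha] using S.alpha_le_alpha h

end InvNearSemiring

namespace LukNearSemiring

variable {R : Type*} (S : LukNearSemiring R)

theorem luk_alpha (x y : R) :
    S.mul (S.alpha (S.mul (S.alpha x) y)) y = S.mul (S.alpha (S.mul (S.alpha y) x)) x := by
  simpa only [S.alpha_alpha] using S.luk (S.alpha x) (S.alpha y)

theorem le_one (x : R) : S.le x S.one := by
  simpa only [S.alpha_alpha, S.alpha_zero] using S.alpha_le_alpha (S.zero_le (S.alpha x))

theorem mul_le_right (x y : R) : S.le (S.mul x y) y := by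
  simpa only [S.one_mul] using S.mul_le_mul_right (S.le_one x) y

theorem le_alpha_of_mul_eq_zero {a b : R} (h : S.mul a b = S.zero) : S.le b (S.alpha a) := by
  have h' := S.luk_alpha (S.alpha a) b
  rw [S.alpha_alpha, h, S.alpha_zero, S.one_mul] at h'
  rw [h']
  exact S.mul_le_right _ _

theorem alpha_mul_mul_le_alpha (x y : R) : S.le (S.mul (S.alpha (S.mul y x)) x) (S.alpha y) := by
  have h := S.mul_le_right (S.alpha (S.mul (S.alpha x) (S.alpha y))) (S.alpha y)
  rwa [← S.luk_alpha, S.alpha_alpha] at h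

theorem mul_le_mul_swap (hassoc : ∀ x y z : R, S.mul (S.mul x y) z = S.mul x (S.mul y z))
    (x y : R) : S.le (S.mul x y) (S.mul y x) := by
  have h : S.le (S.mul (S.mul (S.alpha (S.mul y x)) x) y) S.zero := by
    simpa only [S.alpha_mul_self] using S.mul_le_mul_right (S.alpha_mul_mul_le_alpha x y) y
  have h0 : S.mul (S.alpha (S.mul y x)) (S.mul x y) = S.zero := by
    rw [← hassoc]
    exact S.eq_zero_of_le_zero h
  simpa only [S.alpha_alpha] using S.le_alpha_of_mul_eq_zero h0

theorem mul_comm (hassoc : ∀ x y z : R, S.mul (S.mul x y) z = S.mul x (S.mul y z))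
    (x y : R) : S.mul x y = S.mul y x :=
  S.le_antisymm (S.mul_le_mul_swap hassoc x y) (S.mul_le_mul_swap hassoc y x)

end LukNearSemiring

/-- A Łukasiewicz near semiring with associative multiplication is a commutative
Łukasiewicz semiring: multiplication commutes and left distributivity holds. -/
theorem lukNearSemiring_assoc_comm {R : Type*} (S : LukNearSemiring R)
    (hassoc : ∀ x y z : R, S.mul (S.mul x y) z = S.mul x (S.mul y z)) :
    (∀ x y : R, S.mul x y = S.mul y x) ∧
    (∀ x y z : R, S.mul x (S.add y z) = S.add (S.mul x y) (S.mul x z)) := by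
  have comm := S.mul_comm hassoc
  refine ⟨comm, fun x y z => ?_⟩
  rw [comm x, S.right_distrib, comm y, comm z]
end

section
/- Let R be a Łukasiewicz near semiring with involution α. Define M(x,y,z) = α(α(x) + α(y)) + α(α(y) + α(z)) + α(α(z) + α(x)). Then M is a majority term: M(x,x,y) = M(x,y,x) = M(y,x,x) = x for all x, y ∈ R. (Consequently the variety of Łukasiewicz near semirings is congruence distributive.) -/
/-- The majority term for Łukasiewicz near semirings:
M(x,y,z) = α(α(x)+α(y)) + α(α(y)+α(z)) + α(α(z)+α(x)). -/
def majTerm {R : Type*} (S : LukNearSemiring R) (x y z : R) : R :=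
  S.add (S.add (S.alpha (S.add (S.alpha x) (S.alpha y)))
               (S.alpha (S.add (S.alpha y) (S.alpha z))))
        (S.alpha (S.add (S.alpha z) (S.alpha x)))

/-! Since `α` reverses the order `a ≤ b ↔ a + b = b` and `α a ≤ α a + α b`, the element
`α(α a + α b)` lies below `a`. In each of `M(x,x,y)`, `M(x,y,x)`, `M(y,x,x)` one joinand is
`α(α x + α x) = x` and the other two equal `α(α x + α y)`, so their join is `x`. -/

namespace InvNearSemiring

variable {R : Type*} (S : InvNearSemiring R)

theorem add_add_self_left (a b : R) : S.add a (S.add a b) = S.add a b := by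
  rw [← S.add_assoc, S.add_idem]

theorem alpha_alpha_add_self (a : R) : S.alpha (S.add (S.alpha a) (S.alpha a)) = a := by
  rw [S.add_idem, S.alpha_alpha]

theorem alpha_add_alpha_add_left (a b : R) :
    S.add (S.alpha (S.add (S.alpha a) (S.alpha b))) a = a := by
  simpa only [S.alpha_alpha] using
    S.alpha_antitone _ _ (S.add_add_self_left (S.alpha a) (S.alpha b))

theorem add_alpha_add_alpha_left (a b : R) :
    S.add a (S.alpha (S.add (S.alpha a) (S.alpha b))) = a := by
  rw [S.add_comm, S.alpha_add_alpha_add_left]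

end InvNearSemiring

open InvNearSemiring in
/-- M is a majority term: M(x,x,y) = M(x,y,x) = M(y,x,x) = x. -/
theorem lukNearSemiring_majority {R : Type*} (S : LukNearSemiring R) (x y : R) :
    majTerm S x x y = x ∧ majTerm S x y x = x ∧ majTerm S y x x = x := by
  have hyx : S.add (S.alpha y) (S.alpha x) = S.add (S.alpha x) (S.alpha y) := S.add_comm _ _
  unfold majTerm
  simp only [alpha_alpha_add_self S.toInvNearSemiring, hyx]
  refine ⟨?_, ?_, ?_⟩
  · rw [S.add_assoc, S.add_idem, add_alpha_add_alpha_left]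
  · rw [S.add_idem, alpha_add_alpha_add_left]
  · rw [S.add_comm _ x, add_alpha_add_alpha_left, add_alpha_add_alpha_left]
end

section
/- Let L = ⟨L, ∨, ∧, ', 0, 1⟩ be an orthomodular lattice. Define x + y = x ∨ y, α(x) = x', and multiplication by the Sasaki projection x·y = (x ∨ y') ∧ y. Then ⟨L, +, ·, α, 0, 1⟩ is an orthomodular near semiring: ⟨L, ∨, 0⟩ is a commutative idempotent monoid, 1 is a two-sided unit and 0 a two-sided annihilator for ·, right distributivity (x ∨ y)·z = (x·z) ∨ (y·z) holds, α is an antitone involution, the identity (Ł) α(x·α(y))·α(y) = α(y·α(x))·α(x) holds, and x = x·(x ∨ y). -/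
/-- An orthomodular near semiring: a Łukasiewicz near semiring with x = x·(x+y). -/
structure OMNearSemiring (R : Type*) extends LukNearSemiring R where
  om : ∀ x y : R, x = mul x (add x y)

/-!
The Sasaki projection `x ↦ (x ⊔ z') ⊓ z` fixes every element below `z`, which is the orthomodular
law read through the complement, and it is left adjoint to `w ↦ z' ⊔ (z ⊓ w)`, so right
distributivity is the fact that left adjoints preserve joins. By De Morgan both sides of (Ł)
collapse to `x' ⊓ y'`; the remaining laws are immediate.
-/

section Sasaki

variable {L : Type*} [Lattice L] {c : L → L}

def IsOrthomodular (c : L → L) : Prop :=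
  ∀ x y : L, x ≤ y → y = x ⊔ (y ⊓ c x)

def sasaki (c : L → L) (x z : L) : L :=
  (x ⊔ c z) ⊓ z

def orderIsoDualOfInvolutiveAntitone (hinv : Function.Involutive c) (hanti : Antitone c) :
    L ≃o Lᵒᵈ where
  toFun x := OrderDual.toDual (c x)
  invFun x := c (OrderDual.ofDual x)
  left_inv := hinv
  right_inv := hinv
  map_rel_iff' {x y} := by
    change c y ≤ c x ↔ x ≤ y
    exact ⟨fun h => by simpa only [hinv _] using hanti h, fun h => hanti h⟩

theorem map_sup_of_involutive_antitone (hinv : Function.Involutive c) (hanti : Antitone c)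
    (a b : L) : c (a ⊔ b) = c a ⊓ c b :=
  (orderIsoDualOfInvolutiveAntitone hinv hanti).map_sup a b

theorem map_inf_of_involutive_antitone (hinv : Function.Involutive c) (hanti : Antitone c)
    (a b : L) : c (a ⊓ b) = c a ⊔ c b :=
  (orderIsoDualOfInvolutiveAntitone hinv hanti).map_inf a b

theorem sasaki_of_le (hinv : Function.Involutive c) (hanti : Antitone c) (horth : IsOrthomodular c)
    {w z : L} (h : w ≤ z) : sasaki c w z = w := by
  have hcompl : c w = c z ⊔ (c w ⊓ c (c z)) := horth _ _ (hanti h)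
  calc sasaki c w z = c (c z ⊔ (c w ⊓ c (c z))) := by
        rw [map_sup_of_involutive_antitone hinv hanti, map_inf_of_involutive_antitone hinv hanti,
          hinv, hinv, sasaki, inf_comm]
    _ = w := by rw [← hcompl, hinv]

theorem gc_sasaki (hinv : Function.Involutive c) (hanti : Antitone c) (horth : IsOrthomodular c)
    (z : L) : GaloisConnection (sasaki c · z) (fun w => c z ⊔ (z ⊓ w)) := by
  intro x w
  change sasaki c x z ≤ w ↔ x ≤ c z ⊔ (z ⊓ w)
  constructor
  · intro h
    have hdecomp : x ⊔ c z = c z ⊔ (sasaki c x z) := by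
      simpa only [hinv z, sasaki] using horth (c z) (x ⊔ c z) le_sup_right
    calc x ≤ x ⊔ c z := le_sup_left
      _ = c z ⊔ sasaki c x z := hdecomp
      _ ≤ c z ⊔ (z ⊓ w) := sup_le_sup_left (le_inf inf_le_right h) _
  · intro h
    calc sasaki c x z ≤ sasaki c (z ⊓ w) z :=
          inf_le_inf_right _ (sup_le (h.trans_eq (sup_comm _ _)) le_sup_right)
      _ = z ⊓ w := sasaki_of_le hinv hanti horth inf_le_left
      _ ≤ w := inf_le_right

theorem sasaki_sup (hinv : Function.Involutive c) (hanti : Antitone c) (horth : IsOrthomodular c)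
    (x y z : L) : sasaki c (x ⊔ y) z = sasaki c x z ⊔ sasaki c y z :=
  (gc_sasaki hinv hanti horth z).l_sup

theorem sasaki_compl_sasaki_compl (hinv : Function.Involutive c) (hanti : Antitone c)
    (horth : IsOrthomodular c) (a b : L) :
    sasaki c (c (sasaki c a (c b))) (c b) = c a ⊓ c b := by
  have hsasaki : c (sasaki c a (c b)) = (c a ⊓ c b) ⊔ b := by
    rw [sasaki, map_inf_of_involutive_antitone hinv hanti,
      map_sup_of_involutive_antitone hinv hanti, hinv, hinv]
  calc sasaki c (c (sasaki c a (c b))) (c b) = sasaki c (c a ⊓ c b) (c b) := by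
        rw [hsasaki, sasaki, sasaki, hinv, sup_assoc, sup_idem]
    _ = c a ⊓ c b := sasaki_of_le hinv hanti horth inf_le_right

end Sasaki

theorem orthomodularLattice_to_omNearSemiring_general {L : Type*} [Lattice L]
    [BoundedOrder L] (compl : L → L)
    (compl_compl : ∀ x : L, compl (compl x) = x)
    (compl_antitone : ∀ x y : L, x ≤ y → compl y ≤ compl x)
    (orthomodular : ∀ x y : L, x ≤ y → y = x ⊔ (y ⊓ compl x)) :
    -- ⟨L, ∨, ⊥⟩ is a commutative idempotent monoid
    (∀ x y z : L, (x ⊔ y) ⊔ z = x ⊔ (y ⊔ z)) ∧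
    (∀ x y : L, x ⊔ y = y ⊔ x) ∧
    (∀ x : L, x ⊔ ⊥ = x) ∧
    (∀ x : L, x ⊔ x = x) ∧
    -- ⊤ is a two-sided unit for the Sasaki multiplication
    (∀ x : L, (x ⊔ compl ⊤) ⊓ ⊤ = x) ∧
    (∀ x : L, (⊤ ⊔ compl x) ⊓ x = x) ∧
    -- ⊥ is a two-sided annihilator
    (∀ x : L, (x ⊔ compl ⊥) ⊓ ⊥ = ⊥) ∧
    (∀ x : L, (⊥ ⊔ compl x) ⊓ x = ⊥) ∧
    -- right distributivity
    (∀ x y z : L, ((x ⊔ y) ⊔ compl z) ⊓ z = ((x ⊔ compl z) ⊓ z) ⊔ ((y ⊔ compl z) ⊓ z)) ∧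
    -- the complementation is an antitone involution w.r.t. the induced order
    (∀ x : L, compl (compl x) = x) ∧
    (∀ x y : L, x ⊔ y = y → compl y ⊔ compl x = compl x) ∧
    -- the Łukasiewicz identity (Ł): α(x·α(y))·α(y) = α(y·α(x))·α(x)
    (∀ x y : L,
      (compl ((x ⊔ compl (compl y)) ⊓ compl y) ⊔ compl (compl y)) ⊓ compl y =
      (compl ((y ⊔ compl (compl x)) ⊓ compl x) ⊔ compl (compl x)) ⊓ compl x) ∧
    -- the orthomodular near semiring law x = x·(x + y)
    (∀ x y : L, x = (x ⊔ compl (x ⊔ y)) ⊓ (x ⊔ y)) := by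
  have hinv : Function.Involutive compl := compl_compl
  have hanti : Antitone compl := fun x y h => compl_antitone x y h
  have hfix : ∀ {w z : L}, w ≤ z → sasaki compl w z = w := sasaki_of_le hinv hanti orthomodular
  refine ⟨sup_assoc, sup_comm, sup_bot_eq, sup_idem, fun _ => hfix le_top,
    fun _ => by rw [top_sup_eq, top_inf_eq], fun _ => inf_bot_eq _, fun _ => hfix bot_le,
    sasaki_sup hinv hanti orthomodular, compl_compl,
    fun _ _ h => sup_eq_right.mpr (hanti (sup_eq_right.mp h)), fun x y => ?_,
    fun _ _ => (hfix le_sup_left).symm⟩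
  change sasaki compl (compl (sasaki compl x (compl y))) (compl y) =
    sasaki compl (compl (sasaki compl y (compl x))) (compl x)
  rw [sasaki_compl_sasaki_compl hinv hanti orthomodular,
    sasaki_compl_sasaki_compl hinv hanti orthomodular, inf_comm]

/-- Every orthomodular lattice, with x + y = x ∨ y, α(x) = x' and the Sasaki
projection x·y = (x ∨ y') ∧ y, is an orthomodular near semiring. -/
theorem orthomodularLattice_to_omNearSemiring {L : Type*} [Lattice L]
    [BoundedOrder L] (compl : L → L)
    (compl_compl : ∀ x : L, compl (compl x) = x)
    (compl_antitone : ∀ x y : L, x ≤ y → compl y ≤ compl x)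
    (inf_compl : ∀ x : L, x ⊓ compl x = ⊥)
    (sup_compl : ∀ x : L, x ⊔ compl x = ⊤)
    (orthomodular : ∀ x y : L, x ≤ y → y = x ⊔ (y ⊓ compl x)) :
    -- ⟨L, ∨, ⊥⟩ is a commutative idempotent monoid
    (∀ x y z : L, (x ⊔ y) ⊔ z = x ⊔ (y ⊔ z)) ∧
    (∀ x y : L, x ⊔ y = y ⊔ x) ∧
    (∀ x : L, x ⊔ ⊥ = x) ∧
    (∀ x : L, x ⊔ x = x) ∧
    -- ⊤ is a two-sided unit for the Sasaki multiplication
    (∀ x : L, (x ⊔ compl ⊤) ⊓ ⊤ = x) ∧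
    (∀ x : L, (⊤ ⊔ compl x) ⊓ x = x) ∧
    -- ⊥ is a two-sided annihilator
    (∀ x : L, (x ⊔ compl ⊥) ⊓ ⊥ = ⊥) ∧
    (∀ x : L, (⊥ ⊔ compl x) ⊓ x = ⊥) ∧
    -- right distributivity
    (∀ x y z : L, ((x ⊔ y) ⊔ compl z) ⊓ z = ((x ⊔ compl z) ⊓ z) ⊔ ((y ⊔ compl z) ⊓ z)) ∧
    -- the complementation is an antitone involution w.r.t. the induced order
    (∀ x : L, compl (compl x) = x) ∧
    (∀ x y : L, x ⊔ y = y → compl y ⊔ compl x = compl x) ∧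
    -- the Łukasiewicz identity (Ł): α(x·α(y))·α(y) = α(y·α(x))·α(x)
    (∀ x y : L,
      (compl ((x ⊔ compl (compl y)) ⊓ compl y) ⊔ compl (compl y)) ⊓ compl y =
      (compl ((y ⊔ compl (compl x)) ⊓ compl x) ⊔ compl (compl x)) ⊓ compl x) ∧
    -- the orthomodular near semiring law x = x·(x + y)
    (∀ x y : L, x = (x ⊔ compl (x ⊔ y)) ⊓ (x ⊔ y)) :=
  orthomodularLattice_to_omNearSemiring_general compl compl_compl compl_antitone orthomodular
end

section
/- Let R be an integral involutive near semiring with involution α. Define q(x,y,z) = (x·y) + (α(x)·z). Then q(1,y,z) = y and q(0,y,z) = z for all y, z ∈ R. (Consequently the class of integral involutive near semirings is a Church variety with witness term q.) -/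
/-!
In the order x ≤ y ↔ x + y = y, zero is the least element, so the antitone involution α sends it
to the greatest one; in the integral case that is 1. Hence α 0 = 1 and α 1 = 0, and q(x, y, z)
collapses to y + 0·z = y at x = 1 and to 0·y + z = z at x = 0.
-/

theorem NearSemiring.zero_add_s18 {R : Type*} (S : NearSemiring R) (x : R) : S.add S.zero x = x := by
  rw [S.add_comm, S.add_zero]

namespace InvNearSemiring

variable {R : Type*} (S : InvNearSemiring R)

/-- The witness term q of the Church variety. -/
def churchTerm (x y z : R) : R :=
  S.add (S.mul x y) (S.mul (S.alpha x) z)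

theorem add_alpha_zero (x : R) : S.add x (S.alpha S.zero) = S.alpha S.zero := by
  simpa only [S.alpha_alpha] using S.alpha_antitone S.zero (S.alpha x) (S.zero_add_s18 _)

variable {S}

theorem alpha_zero_of_integral (integral : ∀ x : R, S.add x S.one = S.one) :
    S.alpha S.zero = S.one :=
  calc S.alpha S.zero = S.add S.one (S.alpha S.zero) := (S.add_alpha_zero S.one).symm
    _ = S.add (S.alpha S.zero) S.one := S.add_comm _ _
    _ = S.one := integral _

theorem alpha_one_of_integral (integral : ∀ x : R, S.add x S.one = S.one) :
    S.alpha S.one = S.zero := by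
  rw [← alpha_zero_of_integral integral, S.alpha_alpha]

theorem churchTerm_one (integral : ∀ x : R, S.add x S.one = S.one) (y z : R) :
    S.churchTerm S.one y z = y := by
  rw [churchTerm, S.one_mul, alpha_one_of_integral integral, S.zero_mul, S.add_zero]

theorem churchTerm_zero (integral : ∀ x : R, S.add x S.one = S.one) (y z : R) :
    S.churchTerm S.zero y z = z := by
  rw [churchTerm, S.zero_mul, alpha_zero_of_integral integral, S.one_mul, S.zero_add_s18]

end InvNearSemiring

/-- The term q(x,y,z) = (x·y) + (α(x)·z) witnesses that integral involutive
near semirings form a Church variety: q(1,y,z) = y and q(0,y,z) = z. -/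
theorem integralInvNearSemiring_church {R : Type*} (S : InvNearSemiring R)
    (integral : ∀ x : R, S.add x S.one = S.one) :
    (∀ y z : R, S.add (S.mul S.one y) (S.mul (S.alpha S.one) z) = y) ∧
    (∀ y z : R, S.add (S.mul S.zero y) (S.mul (S.alpha S.zero) z) = z) :=
  ⟨S.churchTerm_one integral, S.churchTerm_zero integral⟩
end
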